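/- Let $n \geq 1$ be an integer, let $t \in \mathbb{R}$, and let $e : \mathbb{R} \to \mathbb{R}$ be $(n+1)$ times continuously differentiable on a neighborhood of $t$. Then the $n$-th order backward difference approximates the derivative with error of order $n$: $\frac{1}{T} \sum_{k=0}^{n} g(n,k)\, e(t - kT) - e'(t) = O(T^n)$ as $T \to 0^+$. -/

import Mathlib

/-!
For `k ≥ 1` the weights are `g n k = (-1)^k C(n,k) / k`, while `g n 0 = H_n` is the harmonic
number. Hence the moments `∑ₖ g n k · k^m` vanish for `m = 0` and `2 ≤ m ≤ n` and equal `-1` for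
`m = 1`: for `m ≥ 1` this is the vanishing of the `n`-th finite difference of `k ↦ k^(m-1)`, and
for `m = 0` it is the classical identity `∑ₖ (-1)^(k-1) C(n,k) / k = H_n`. So the scheme is exact
on polynomials of degree at most `n`, and applied to the Taylor expansion of order `n` of `e` at
`t` it only sees the remainders `O(T^(n+1))`.
-/

open Finset

/-- The `n`-th order backward difference weights `g n k`, `0 ≤ k ≤ n`, defined by
`g n 0 = ∑_{j=1}^{n} 1/j`, `g n 1 = -n`, and
`g n k = -g n (k-1) · (k-1)(n-k+1)/k²` for `2 ≤ k ≤ n`. -/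
noncomputable def g (n : ℕ) : ℕ → ℝ
  | 0 => ∑ j ∈ Finset.range n, (1 : ℝ) / (j + 1)
  | 1 => -(n : ℝ)
  | (k + 2) =>
      -g n (k + 1) * (((k : ℝ) + 2) - 1) * ((n : ℝ) - ((k : ℝ) + 2) + 1) / ((k : ℝ) + 2) ^ 2

open Filter Asymptotics Topology
open scoped Nat

theorem Nat.cast_choose_succ_mul {R : Type*} [Ring R] (n k : ℕ) :
    (n.choose (k + 1) : R) * (k + 1) = n.choose k * (n - k) := by
  rcases le_or_gt k n with hk | hk
  · have h := congrArg (Nat.cast : ℕ → R) (Nat.choose_succ_right_eq n k)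
    push_cast [hk] at h
    exact h
  · simp [Nat.choose_eq_zero_of_lt hk, Nat.choose_eq_zero_of_lt (hk.trans k.lt_succ_self)]

theorem g_succ (n k : ℕ) : g n (k + 1) = (-1) ^ (k + 1) * n.choose (k + 1) / (k + 1) := by
  induction k with
  | zero => simp [g]
  | succ k ih =>
    have hc := Nat.cast_choose_succ_mul (R := ℝ) n (k + 1)
    rw [g, ih]
    push_cast at hc ⊢
    field_simp
    linear_combination -(-1) ^ k * (k + 1) * (k + 2) * hc

theorem sum_range_alternating_choose_mul_pow {R : Type*} [CommRing R] {n j : ℕ} (h : j < n) :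
    ∑ k ∈ range (n + 1), (-1 : R) ^ k * n.choose k * (k : R) ^ j = 0 := by
  have hΔ := congrFun (fwdDiff_iter_pow_eq_zero_of_lt (R := R) h) 0
  rw [fwdDiff_iter_eq_sum_shift] at hΔ
  calc _ = (-1) ^ n * ∑ k ∈ range (n + 1),
        ((-1 : ℤ) ^ (n - k) * n.choose k) • ((0 : R) + k • 1) ^ j := by
        rw [mul_sum]
        refine sum_congr rfl fun k hk => ?_
        -- the signs agree since `(-1) ^ n * (-1) ^ (n - k) = (-1) ^ (k + 2 * (n - k))`
        obtain ⟨i, rfl⟩ := Nat.exists_eq_add_of_le (Nat.lt_succ_iff.mp (mem_range.mp hk))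
        simp only [Nat.add_sub_cancel_left, zero_add, nsmul_eq_mul, mul_one, zsmul_eq_mul]
        push_cast
        rw [pow_add]
        ring_nf
        simp
    _ = 0 := by rw [hΔ, Pi.zero_apply, mul_zero]

theorem sum_range_alternating_choose_div_succ (n : ℕ) :
    ∑ k ∈ range (n + 1), (-1 : ℝ) ^ k * n.choose k / (k + 1) = 1 / (n + 1) := by
  have h := sum_range_alternating_choose_mul_pow (R := ℝ) (Nat.succ_pos n)
  rw [sum_range_succ'] at h
  simp only [pow_zero, mul_one, Nat.choose_zero_right, Nat.cast_one, pow_succ, mul_neg,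
    neg_mul, sum_neg_distrib] at h
  have hterm : ∀ k ∈ range (n + 1), (-1 : ℝ) ^ k * n.choose k / (k + 1)
      = (-1) ^ k * (n + 1).choose (k + 1) / (n + 1) := fun k _ => by
    have := Nat.add_one_mul_choose_eq n k
    rw [div_eq_div_iff (by positivity) (by positivity), mul_assoc, mul_assoc,
      mul_comm (n.choose k : ℝ)]
    exact congrArg ((-1 : ℝ) ^ k * ·) (by exact_mod_cast this)
  rw [sum_congr rfl hterm, ← sum_div]
  congr 1
  linarith

theorem sum_range_alternating_choose_succ_div_succ (n : ℕ) :
    ∑ k ∈ range n, (-1 : ℝ) ^ k * n.choose (k + 1) / (k + 1)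
      = ∑ k ∈ range n, (1 : ℝ) / (k + 1) := by
  induction n with
  | zero => simp
  | succ n ih =>
    simp only [Nat.choose_succ_succ', Nat.cast_add, mul_add, add_div, sum_add_distrib,
      sum_range_alternating_choose_div_succ]
    rw [sum_range_succ, sum_range_succ, ih]
    simp [add_comm]

theorem sum_range_g_mul_pow {n m : ℕ} (hm : m ≤ n) :
    ∑ k ∈ range (n + 1), g n k * (k : ℝ) ^ m = if m = 1 then -1 else 0 := by
  rw [sum_range_succ']
  simp only [g_succ]
  cases m with
  | zero =>
    simp only [pow_zero, mul_one, pow_succ, mul_neg_one, neg_mul, neg_div, sum_neg_distrib,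
      sum_range_alternating_choose_succ_div_succ, g]
    simp
  | succ j =>
    have h := sum_range_alternating_choose_mul_pow (R := ℝ) (Nat.lt_of_succ_le hm)
    rw [sum_range_succ'] at h
    have hterm : ∀ k ∈ range n,
        (-1 : ℝ) ^ (k + 1) * n.choose (k + 1) / (k + 1) * ((k + 1 : ℕ) : ℝ) ^ (j + 1)
          = (-1) ^ (k + 1) * n.choose (k + 1) * ((k + 1 : ℕ) : ℝ) ^ j := fun k _ => by
      push_cast; field_simp; ring
    rw [sum_congr rfl hterm]
    rcases j with _ | j <;> simp at h ⊢ <;> linarith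

theorem sum_range_g_mul_taylorWithinEval {n : ℕ} (hn : 1 ≤ n) (f : ℝ → ℝ) (s : Set ℝ)
    (x₀ T : ℝ) :
    ∑ k ∈ range (n + 1), g n k * taylorWithinEval f n s x₀ (x₀ - k * T)
      = T * derivWithin f s x₀ := by
  simp only [taylor_within_apply, smul_eq_mul, sub_sub_cancel_left, mul_sum]
  rw [sum_comm]
  calc _ = ∑ m ∈ range (n + 1), ((m ! : ℝ)⁻¹ * (-T) ^ m * iteratedDerivWithin m f s x₀) *
        ∑ k ∈ range (n + 1), g n k * (k : ℝ) ^ m := by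
        refine sum_congr rfl fun m _ => ?_
        rw [mul_sum]
        exact sum_congr rfl fun k _ => by ring
    _ = T * derivWithin f s x₀ := by
        rw [sum_congr rfl fun m hm => by
          rw [sum_range_g_mul_pow (Nat.lt_succ_iff.mp (mem_range.mp hm))]]
        simp [iteratedDerivWithin_one, Nat.one_le_iff_ne_zero.mp hn]

section Taylor

variable {E : Type*} [NormedAddCommGroup E] [NormedSpace ℝ E] {f : ℝ → E} {n : ℕ} {s : Set ℝ}
  {x₀ : ℝ}

theorem taylorWithinEval_of_isOpen (hs : IsOpen s) (hx₀ : x₀ ∈ s) :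
    taylorWithinEval f n s x₀ = taylorWithinEval f n Set.univ x₀ := by
  ext x
  simp only [taylor_within_apply, iteratedDerivWithin_univ, iteratedDerivWithin_of_isOpen hs hx₀]

theorem taylor_isBigO_of_mem_nhds (hs : s ∈ 𝓝 x₀) (hf : ContDiffOn ℝ (n + 1) f s) :
    (fun x => f x - taylorWithinEval f n Set.univ x₀ x) =O[𝓝 x₀] fun x => (x - x₀) ^ (n + 1) := by
  obtain ⟨ε, hε, hball⟩ := Metric.mem_nhds_iff.mp hs
  have hx₀ := Metric.mem_ball_self hε (x := x₀)
  have hlo := taylor_isLittleO (convex_ball x₀ ε) hx₀ (n := n + 1) (by exact_mod_cast hf.mono hball)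
  rw [nhdsWithin_eq_nhds.mpr (Metric.isOpen_ball.mem_nhds hx₀)] at hlo
  simp only [taylorWithinEval_of_isOpen Metric.isOpen_ball hx₀] at hlo
  simp only [taylorWithinEval_succ] at hlo
  set D := iteratedDerivWithin (n + 1) f Set.univ x₀
  have hD : (fun x => (((n + 1 : ℝ) * n !)⁻¹ * (x - x₀) ^ (n + 1)) • D) =O[𝓝 x₀]
      fun x => (x - x₀) ^ (n + 1) :=
    isBigO_of_le' (c := ‖((n + 1 : ℝ) * n !)⁻¹‖ * ‖D‖) _ fun x => by
      exact le_of_eq (by rw [norm_smul, norm_mul]; ring)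
  exact (hlo.isBigO.add hD).congr_left fun x => by abel

theorem taylor_sub_mul_isBigO (hs : s ∈ 𝓝 x₀) (hf : ContDiffOn ℝ (n + 1) f s) (c : ℝ) :
    (fun h => f (x₀ - c * h) - taylorWithinEval f n Set.univ x₀ (x₀ - c * h)) =O[𝓝 0]
      fun h => h ^ (n + 1) := by
  have hc : Tendsto (fun h : ℝ => x₀ - c * h) (𝓝 0) (𝓝 x₀) := by
    simpa using (show Continuous fun h : ℝ => x₀ - c * h by fun_prop).tendsto 0
  refine ((taylor_isBigO_of_mem_nhds hs hf).comp_tendsto hc).trans ?_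
  exact ((isBigO_refl _ _).const_mul_left ((-c) ^ (n + 1))).congr_left fun h => by
    simp only [Function.comp_apply]; ring

end Taylor

/-- If `e` is `(n+1)` times continuously differentiable on a neighborhood of `t`, the
`n`-th order backward difference approximates the derivative with error `O(Tⁿ)` as
`T → 0⁺`. -/
theorem backward_difference_order_n (n : ℕ) (hn : 1 ≤ n) (t : ℝ) (e : ℝ → ℝ)
    (he : ∃ s ∈ nhds t, ContDiffOn ℝ (n + 1) e s) :
    ∃ C > (0 : ℝ), ∃ δ > (0 : ℝ), ∀ T : ℝ, 0 < T → T < δ →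
      |(1 / T) * ∑ k ∈ Finset.range (n + 1), g n k * e (t - k * T) - deriv e t|
        ≤ C * T ^ n := by
  obtain ⟨s, hs, hcd⟩ := he
  set P := taylorWithinEval e n Set.univ t
  have hremainder : (fun T => ∑ k ∈ range (n + 1), g n k * (e (t - k * T) - P (t - k * T)))
      =O[𝓝 0] fun T => T ^ (n + 1) :=
    IsBigO.fun_sum fun k _ => (taylor_sub_mul_isBigO hs hcd k).const_mul_left _
  obtain ⟨C, hC, hbound⟩ := hremainder.exists_pos
  obtain ⟨δ, hδ, hnear⟩ := Metric.eventually_nhds_iff.mp (isBigOWith_iff.mp hbound)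
  refine ⟨C, hC, δ, hδ, fun T hT hTδ => ?_⟩
  have hexact : ∑ k ∈ range (n + 1), g n k * P (t - k * T) = T * deriv e t := by
    rw [← derivWithin_univ]
    exact sum_range_g_mul_taylorWithinEval hn e _ t T
  have hsplit : (1 / T) * ∑ k ∈ range (n + 1), g n k * e (t - k * T) - deriv e t
      = (∑ k ∈ range (n + 1), g n k * (e (t - k * T) - P (t - k * T))) / T := by
    simp only [mul_sub, sum_sub_distrib, hexact]
    field_simp
  have hT' := hnear (show dist T 0 < δ by rwa [Real.dist_0_eq_abs, abs_of_pos hT])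
  rw [hsplit, abs_div, abs_of_pos hT, div_le_iff₀ hT]
  simpa [abs_of_pos hT, pow_succ, mul_assoc] using hT'
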